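/- Let w solve the unreflected auxiliary system for data (B,b,y) and wⁿ solve it for data (Bⁿ,bⁿ,yⁿ). Fix t ≥ 0 and δ > 0, and suppose |bⁿ − b| + ‖yⁿ − y‖_t + ‖φ_{Bⁿ}(w₂) − φ_B(w₂)‖_t < δ. Then ‖w₁ⁿ − w₁‖_t ≤ 2δ(1+t)e^{6t} and ‖w₂ⁿ − w₂‖_t ≤ 4δ(1+t)e^{6t}. -/

import Mathlib

open MeasureTheory Filter Set
open scoped ENNReal

noncomputable section

/-- `f` is càdlàg on `[0,∞)`: right-continuous at every `t ≥ 0` and possessing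
finite left limits at every `t > 0`.  (Values on `(-∞,0)` are irrelevant.) -/
def Cadlag (f : ℝ → ℝ) : Prop :=
  (∀ t : ℝ, 0 ≤ t → ContinuousWithinAt f (Set.Ici t) t) ∧
    (∀ t : ℝ, 0 < t → ∃ L : ℝ, Filter.Tendsto f (nhdsWithin t (Set.Iio t)) (nhds L))

/-- Uniform norm of `x` on `[0,t]`: `‖x‖_t = sup_{0 ≤ s ≤ t} |x(s)|`. -/
def unif (x : ℝ → ℝ) (t : ℝ) : ℝ := ⨆ s : Set.Icc (0:ℝ) t, |x s.1|

/-- Regulator of the one-sided reflection map with upper barrier `κ ∈ ℝ`: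
`ψ_κ(x)(t) = sup_{0 ≤ s ≤ t} (x(s) - κ)⁺`. -/
def psiR (κ : ℝ) (x : ℝ → ℝ) (t : ℝ) : ℝ := ⨆ s : Set.Icc (0:ℝ) t, max (x s.1 - κ) 0

/-- One-sided reflection map with upper barrier `κ ∈ ℝ`: `φ_κ(x) = x - ψ_κ(x)`. -/
def phiR (κ : ℝ) (x : ℝ → ℝ) (t : ℝ) : ℝ := x t - psiR κ x t

/-- Regulator for a barrier `κ ∈ [0,∞]`; for `κ = ∞` it is identically `0`. -/
def psiE (κ : ℝ≥0∞) (x : ℝ → ℝ) : ℝ → ℝ := if κ = ⊤ then 0 else psiR κ.toReal x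

/-- Reflection map for a barrier `κ ∈ [0,∞]`; for `κ = ∞` it is the identity. -/
def phiE (κ : ℝ≥0∞) (x : ℝ → ℝ) : ℝ → ℝ := if κ = ⊤ then x else phiR κ.toReal x

/-- "`∫ 𝟙_S du = 0`": every Stieltjes function agreeing with the
(constant-below-zero extension of) `u` assigns measure zero to `S`. -/
def ZeroStieltjesOn (u : ℝ → ℝ) (S : Set ℝ) : Prop :=
  ∀ sf : StieltjesFunction ℝ, (∀ t : ℝ, sf t = u (max t 0)) → sf.measure S = 0

/-- `u₁, u₂` is a valid pair of regulator processes for `x₁` (barrier `0` from above)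
and `x₂` (upper barrier `B ∈ [0,∞]`): nondecreasing nonnegative elements of `D` with
`∫₀^∞ 𝟙{x₁(t) < 0} du₁(t) = 0` and `∫₀^∞ 𝟙{x₂(t) < B} du₂(t) = 0`. -/
def IsRegulator (B : ℝ≥0∞) (x₁ x₂ u₁ u₂ : ℝ → ℝ) : Prop :=
  Cadlag u₁ ∧ Cadlag u₂ ∧ MonotoneOn u₁ (Set.Ici 0) ∧ MonotoneOn u₂ (Set.Ici 0) ∧
    (∀ t ≥ (0:ℝ), 0 ≤ u₁ t) ∧ (∀ t ≥ (0:ℝ), 0 ≤ u₂ t) ∧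
    ZeroStieltjesOn u₁ {t | 0 ≤ t ∧ x₁ t < 0} ∧
    ZeroStieltjesOn u₂ {t | 0 ≤ t ∧ ENNReal.ofReal (x₂ t) < B}
/-- `(w₁, w₂)` solves the unreflected auxiliary system with data
`(B, b₁, b₂, y₁, y₂)` (equations (20)-(21) of the paper). -/
def IsAuxSolution (B : ℝ≥0∞) (b₁ b₂ : ℝ) (y₁ y₂ w₁ w₂ : ℝ → ℝ) : Prop :=
  Cadlag w₁ ∧ Cadlag w₂ ∧
  (∀ t ≥ (0:ℝ), w₁ t =
      b₁ + y₁ t + ∫ s in (0:ℝ)..t, (-(phiR 0 w₁ s) + phiE B w₂ s)) ∧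
  (∀ t ≥ (0:ℝ), w₂ t =
      b₂ + y₂ t + psiR 0 w₁ t + ∫ s in (0:ℝ)..t, -(phiE B w₂ s)) ∧
  (∀ t ≥ (0:ℝ), 0 ≤ w₂ t)

/-! Write `g₁(r) = ‖w₁ⁿ - w₁‖_r`, `g₂(r) = ‖w₂ⁿ - w₂‖_r` and
`K = |bⁿ - b| + ‖yⁿ - y‖_t + t ‖φ_{Bⁿ}(w₂) - φ_B(w₂)‖_t ≤ δ (1 + t)`.
For bounded paths `ψ_κ` is 1-Lipschitz and `φ_κ` is 2-Lipschitz in the uniform norm on `[0, r]`,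
and `φ_{Bⁿ}(w₂ⁿ) - φ_B(w₂)` differs from `φ_{Bⁿ}(w₂ⁿ) - φ_{Bⁿ}(w₂)` by at most the data term.
Subtracting the integral equations therefore gives
`g₁ ≤ K + 2 ∫₀ (g₁ + g₂)` and `g₂ ≤ K + g₁ + 2 ∫₀ (g₁ + g₂)`, so `g₁ + g₂ ≤ 3K + 6 ∫₀ (g₁ + g₂)`.
Grönwall's inequality bounds `3K + 6 ∫₀ᵗ (g₁ + g₂)` by `3K e^{6t}`, which yields
`g₁(t) ≤ K e^{6t}` and `g₂(t) ≤ 3K e^{6t}`. -/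

namespace Cadlag

variable {f : ℝ → ℝ}

theorem eventually_abs_le (hf : Cadlag f) {t x : ℝ} (hx : x ∈ Icc 0 t) :
    ∃ C, ∀ᶠ y in nhdsWithin x (Icc 0 t), |f y| ≤ C := by
  have hright : ∀ᶠ y in nhdsWithin x (Ici x), |f y| ≤ |f x| + 1 :=
    ((hf.1 x hx.1).tendsto.abs.eventually_lt_const (lt_add_one _)).mono fun _ hy => hy.le
  rcases hx.1.eq_or_lt with rfl | hpos
  · exact ⟨_, nhdsWithin_mono _ (fun y hy => hy.1) hright⟩
  obtain ⟨L, hL⟩ := hf.2 x hpos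
  have hleft : ∀ᶠ y in nhdsWithin x (Iio x), |f y| ≤ |L| + 1 :=
    (hL.abs.eventually_lt_const (lt_add_one _)).mono fun _ hy => hy.le
  refine ⟨max (|L| + 1) (|f x| + 1), eventually_nhdsWithin_of_eventually_nhds ?_⟩
  rw [← nhdsWithin_univ, ← Iio_union_Ici, nhdsWithin_union]
  exact eventually_sup.2 ⟨hleft.mono fun _ hy => hy.trans (le_max_left _ _),
    hright.mono fun _ hy => hy.trans (le_max_right _ _)⟩

theorem exists_bound (hf : Cadlag f) (t : ℝ) : ∃ M, ∀ s ∈ Icc 0 t, |f s| ≤ M :=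
  isCompact_Icc.induction_on (p := fun U => ∃ M, ∀ s ∈ U, |f s| ≤ M) ⟨0, by simp⟩
    (fun _ _ hUV ⟨M, hM⟩ => ⟨M, fun s hs => hM s (hUV hs)⟩)
    (fun _ _ ⟨M, hM⟩ ⟨M', hM'⟩ => ⟨max M M', fun s hs => hs.elim
      (fun hs => (hM s hs).trans (le_max_left _ _)) fun hs => (hM' s hs).trans (le_max_right _ _)⟩)
    fun _ hx => let ⟨C, hC⟩ := hf.eventually_abs_le hx; ⟨_, hC, C, fun _ hy => hy⟩

end Cadlag

theorem aestronglyMeasurable_of_continuousWithinAt_Ici {f : ℝ → ℝ} {μ : Measure ℝ}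
    (hf : ∀ s, 0 ≤ s → ContinuousWithinAt f (Ici s) s) :
    AEStronglyMeasurable f (μ.restrict (Ici 0)) := by
  -- approximate `s` from the right by the dyadic points `⌈2ⁿ s⌉ / 2ⁿ`
  refine aestronglyMeasurable_of_tendsto_ae atTop
    (f := fun (n : ℕ) s => f (⌈s * 2 ^ n⌉₊ / 2 ^ n)) (fun n => ?_) ?_
  · exact ((measurable_from_nat (f := fun k : ℕ => f (k / 2 ^ n))).comp
      (Nat.measurable_ceil.comp (measurable_id.mul_const _))).aestronglyMeasurable
  refine ae_restrict_of_forall_mem measurableSet_Ici fun s hs => (hf s hs).tendsto.comp ?_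
  refine tendsto_nhdsWithin_iff.2 ⟨(tendsto_nat_ceil_mul_div_atTop hs).comp
    (tendsto_pow_atTop_atTop_of_one_lt one_lt_two), .of_forall fun n => ?_⟩
  exact (le_div_iff₀ (by positivity : (0:ℝ) < 2 ^ n)).2 (Nat.le_ceil _)

theorem Cadlag.intervalIntegrable {f : ℝ → ℝ} (hf : Cadlag f) {t : ℝ} (ht : 0 ≤ t) :
    IntervalIntegrable f volume 0 t := by
  obtain ⟨M, hM⟩ := hf.exists_bound t
  rw [intervalIntegrable_iff_integrableOn_Ioc_of_le ht]
  refine ⟨(aestronglyMeasurable_of_continuousWithinAt_Ici hf.1).mono_measure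
    (Measure.restrict_mono (Ioc_subset_Ioi_self.trans Ioi_subset_Ici_self) le_rfl),
    .restrict_of_bounded (C := M) measure_Ioc_lt_top ?_⟩
  exact ae_restrict_of_forall_mem measurableSet_Ioc fun s hs => hM s (Ioc_subset_Icc_self hs)

theorem MonotoneOn.intervalIntegrable_of_le {f : ℝ → ℝ} {a b : ℝ} (hf : MonotoneOn f (Icc a b))
    (hab : a ≤ b) : IntervalIntegrable f volume a b :=
  MonotoneOn.intervalIntegrable (by rwa [uIcc_of_le hab])

section Supremum

variable {x x' : ℝ → ℝ} {κ t M M' : ℝ}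

theorem unif_nonneg (x : ℝ → ℝ) (t : ℝ) : 0 ≤ unif x t :=
  Real.iSup_nonneg fun _ => abs_nonneg _

theorem unif_le (ht : 0 ≤ t) (h : ∀ s ∈ Icc 0 t, |x s| ≤ M) : unif x t ≤ M :=
  haveI : Nonempty (Icc (0:ℝ) t) := ⟨⟨0, le_rfl, ht⟩⟩
  ciSup_le fun s => h s s.2

theorem abs_le_unif (hx : ∀ s ∈ Icc 0 t, |x s| ≤ M) {s : ℝ} (hs : s ∈ Icc 0 t) :
    |x s| ≤ unif x t :=
  le_ciSup (f := fun s : Icc (0:ℝ) t => |x s|) ⟨M, by rintro _ ⟨u, rfl⟩; exact hx u u.2⟩ ⟨s, hs⟩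

theorem monotoneOn_unif (hx : ∀ s ∈ Icc 0 t, |x s| ≤ M) : MonotoneOn (unif x) (Icc 0 t) :=
  fun _ hr _ hr' hrr' => unif_le hr.1 fun _ hs =>
    abs_le_unif (fun u hu => hx u ⟨hu.1, hu.2.trans hr'.2⟩) ⟨hs.1, hs.2.trans hrr'⟩

theorem unif_sub_comm (x x' : ℝ → ℝ) (t : ℝ) :
    unif (fun s => x s - x' s) t = unif (fun s => x' s - x s) t := by
  simp only [unif, abs_sub_comm]

theorem abs_sub_le_add_of_abs_le (hx : ∀ s ∈ Icc 0 t, |x s| ≤ M)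
    (hx' : ∀ s ∈ Icc 0 t, |x' s| ≤ M') : ∀ s ∈ Icc 0 t, |x s - x' s| ≤ M + M' :=
  fun s hs => (abs_sub _ _).trans (add_le_add (hx s hs) (hx' s hs))

theorem psiR_nonneg (κ : ℝ) (x : ℝ → ℝ) (t : ℝ) : 0 ≤ psiR κ x t :=
  Real.iSup_nonneg fun _ => le_max_right _ _

theorem psiR_le (ht : 0 ≤ t) (hM : 0 ≤ M) (h : ∀ s ∈ Icc 0 t, x s - κ ≤ M) : psiR κ x t ≤ M :=
  haveI : Nonempty (Icc (0:ℝ) t) := ⟨⟨0, le_rfl, ht⟩⟩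
  ciSup_le fun s => max_le (h s s.2) hM

theorem sub_le_psiR (hx : ∀ s ∈ Icc 0 t, |x s| ≤ M) {s : ℝ} (hs : s ∈ Icc 0 t) :
    x s - κ ≤ psiR κ x t := by
  refine (le_max_left _ 0).trans (le_ciSup (f := fun s : Icc (0:ℝ) t => max (x s - κ) 0)
    ⟨max (M - κ) 0, ?_⟩ ⟨s, hs⟩)
  rintro _ ⟨u, rfl⟩
  exact max_le_max_right 0 (by linarith [(abs_le.1 (hx u u.2)).2])

theorem monotoneOn_psiR (hx : ∀ s ∈ Icc 0 t, |x s| ≤ M) : MonotoneOn (psiR κ x) (Icc 0 t) :=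
  fun _ hr _ hr' hrr' => psiR_le hr.1 (psiR_nonneg _ _ _) fun _ hs =>
    sub_le_psiR (fun u hu => hx u ⟨hu.1, hu.2.trans hr'.2⟩) ⟨hs.1, hs.2.trans hrr'⟩

theorem psiR_le_psiR_add_unif (ht : 0 ≤ t) (hx : ∀ s ∈ Icc 0 t, |x s| ≤ M)
    (hx' : ∀ s ∈ Icc 0 t, |x' s| ≤ M') :
    psiR κ x t ≤ psiR κ x' t + unif (fun s => x s - x' s) t := by
  refine psiR_le ht (add_nonneg (psiR_nonneg _ _ _) (unif_nonneg _ _)) fun s hs => ?_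
  have h₁ := sub_le_psiR (κ := κ) hx' hs
  have h₂ := abs_le_unif (abs_sub_le_add_of_abs_le hx hx') hs
  linarith [le_abs_self (x s - x' s)]

theorem abs_psiR_sub_le_unif (ht : 0 ≤ t) (hx : ∀ s ∈ Icc 0 t, |x s| ≤ M)
    (hx' : ∀ s ∈ Icc 0 t, |x' s| ≤ M') :
    |psiR κ x t - psiR κ x' t| ≤ unif (fun s => x s - x' s) t :=
  abs_sub_le_iff.2 ⟨by linarith [psiR_le_psiR_add_unif (κ := κ) ht hx hx'],
    by linarith [psiR_le_psiR_add_unif (κ := κ) ht hx' hx, unif_sub_comm x x' t]⟩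

theorem abs_phiR_sub_le_unif (ht : 0 ≤ t) (hx : ∀ s ∈ Icc 0 t, |x s| ≤ M)
    (hx' : ∀ s ∈ Icc 0 t, |x' s| ≤ M') :
    |phiR κ x t - phiR κ x' t| ≤ 2 * unif (fun s => x s - x' s) t := by
  have h₁ := abs_le_unif (abs_sub_le_add_of_abs_le hx hx') ⟨ht, le_rfl⟩
  have h₂ := abs_psiR_sub_le_unif (κ := κ) ht hx hx'
  calc |phiR κ x t - phiR κ x' t| = |(x t - x' t) - (psiR κ x t - psiR κ x' t)| := by
        rw [phiR, phiR]; congr 1; ring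
    _ ≤ |x t - x' t| + |psiR κ x t - psiR κ x' t| := abs_sub _ _
    _ ≤ 2 * unif (fun s => x s - x' s) t := by linarith

theorem abs_phiE_sub_le_unif (B : ℝ≥0∞) (ht : 0 ≤ t) (hx : ∀ s ∈ Icc 0 t, |x s| ≤ M)
    (hx' : ∀ s ∈ Icc 0 t, |x' s| ≤ M') :
    |phiE B x t - phiE B x' t| ≤ 2 * unif (fun s => x s - x' s) t := by
  by_cases hB : B = ⊤
  · simp only [phiE, hB, if_true]
    linarith [abs_le_unif (abs_sub_le_add_of_abs_le hx hx') ⟨ht, le_rfl⟩, unif_nonneg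
      (fun s => x s - x' s) t]
  · simp only [phiE, if_neg hB]
    exact abs_phiR_sub_le_unif ht hx hx'

theorem abs_phiR_le (hκ : 0 ≤ κ) (hx : ∀ s ∈ Icc 0 t, |x s| ≤ M) :
    ∀ r ∈ Icc 0 t, |phiR κ x r| ≤ 2 * M := by
  intro r hr
  have hM : 0 ≤ M := (abs_nonneg _).trans (hx r hr)
  have hψ : psiR κ x r ≤ M := psiR_le hr.1 hM fun s hs => by
    linarith [(abs_le.1 (hx s ⟨hs.1, hs.2.trans hr.2⟩)).2]
  rw [phiR, abs_le]
  constructor <;> linarith [abs_le.1 (hx r hr), psiR_nonneg κ x r]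

theorem abs_phiE_le (B : ℝ≥0∞) (hx : ∀ s ∈ Icc 0 t, |x s| ≤ M) :
    ∀ r ∈ Icc 0 t, |phiE B x r| ≤ 2 * M := by
  intro r hr
  by_cases hB : B = ⊤
  · simp only [phiE, hB, if_true]
    linarith [hx r hr, abs_nonneg (x r)]
  · simp only [phiE, if_neg hB]
    exact abs_phiR_le ENNReal.toReal_nonneg hx r hr

end Supremum

theorem Cadlag.intervalIntegrable_phiR {x : ℝ → ℝ} (hx : Cadlag x) (κ : ℝ) {t : ℝ}
    (ht : 0 ≤ t) : IntervalIntegrable (phiR κ x) volume 0 t :=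
  let ⟨_, hM⟩ := hx.exists_bound t
  (hx.intervalIntegrable ht).sub ((monotoneOn_psiR hM).intervalIntegrable_of_le ht)

theorem Cadlag.intervalIntegrable_phiE {x : ℝ → ℝ} (hx : Cadlag x) (B : ℝ≥0∞) {t : ℝ}
    (ht : 0 ≤ t) : IntervalIntegrable (phiE B x) volume 0 t := by
  unfold phiE
  split_ifs
  exacts [hx.intervalIntegrable ht, hx.intervalIntegrable_phiR _ ht]

section Gronwall

variable {v : ℝ → ℝ} {A L t M : ℝ}

theorem mul_integral_const_mul_exp (A L r : ℝ) :
    L * ∫ s in (0:ℝ)..r, A * Real.exp (L * s) = A * Real.exp (L * r) - A := by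
  rw [← intervalIntegral.integral_const_mul,
    intervalIntegral.integral_eq_sub_of_hasDerivAt (f := fun s => A * Real.exp (L * s))
      (fun s _ => ?_)
      ((by fun_prop : Continuous fun s => L * (A * Real.exp (L * s))).intervalIntegrable _ _)]
  · simp
  · have := (((hasDerivAt_id s).const_mul L).exp).const_mul A
    simp only [id, mul_one] at this
    exact this.congr_deriv (by ring)

theorem nonpos_of_le_mul_integral (hL : 0 ≤ L) (hv : IntervalIntegrable v volume 0 t)
    (hM : ∀ r ∈ Icc 0 t, v r ≤ M) (hle : ∀ r ∈ Icc 0 t, v r ≤ L * ∫ s in (0:ℝ)..r, v s)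
    {r : ℝ} (hr : r ∈ Icc 0 t) : v r ≤ 0 := by
  have key (n : ℕ) : ∀ r ∈ Icc 0 t, v r ≤ M * ((L * r) ^ n / n.factorial) := by
    induction n with
    | zero => simpa using hM
    | succ n ih =>
      intro r hr
      have hpow (s : ℝ) : M * ((L * s) ^ n / n.factorial) = M * L ^ n / n.factorial * s ^ n := by
        ring
      calc v r ≤ L * ∫ s in (0:ℝ)..r, v s := hle r hr
        _ ≤ L * ∫ s in (0:ℝ)..r, M * ((L * s) ^ n / n.factorial) := by
          refine mul_le_mul_of_nonneg_left (intervalIntegral.integral_mono_on hr.1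
            (hv.mono_set (uIcc_subset_uIcc_left (Icc_subset_uIcc hr)))
            ((by fun_prop : Continuous fun s => M * ((L * s) ^ n / n.factorial)).intervalIntegrable
              _ _)
            fun s hs => ?_) hL
          exact ih s ⟨hs.1, hs.2.trans hr.2⟩
        _ = M * ((L * r) ^ (n + 1) / (n + 1).factorial) := by
          simp only [hpow, intervalIntegral.integral_const_mul, integral_pow, Nat.factorial_succ]
          push_cast
          field_simp
          ring
  have hlim : Tendsto (fun n : ℕ => M * ((L * r) ^ n / n.factorial)) atTop (nhds 0) := by
    simpa only [mul_zero] using (FloorSemiring.tendsto_pow_div_factorial_atTop (L * r)).const_mul M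
  exact ge_of_tendsto' hlim fun n => key n r hr

theorem add_mul_integral_le_mul_exp {h : ℝ → ℝ} (hL : 0 ≤ L) (hh : IntervalIntegrable h volume 0 t)
    (hM : ∀ r ∈ Icc 0 t, h r ≤ M) (hle : ∀ r ∈ Icc 0 t, h r ≤ A + L * ∫ s in (0:ℝ)..r, h s)
    {r : ℝ} (hr : r ∈ Icc 0 t) : A + L * ∫ s in (0:ℝ)..r, h s ≤ A * Real.exp (L * r) := by
  have hexp : Continuous fun s => A * Real.exp (L * s) := by fun_prop
  -- `A e^{L·}` solves `u = A + L ∫₀ u`, so the gap `h - A e^{L·}` obeys the homogeneous inequality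
  have hgap : ∀ r ∈ Icc 0 t, L * ∫ s in (0:ℝ)..r, (h s - A * Real.exp (L * s))
      = A + (L * ∫ s in (0:ℝ)..r, h s) - A * Real.exp (L * r) := by
    intro r hr
    rw [intervalIntegral.integral_sub (hh.mono_set (uIcc_subset_uIcc_left (Icc_subset_uIcc hr)))
      (hexp.intervalIntegrable _ _), mul_sub, mul_integral_const_mul_exp]
    ring
  have hbdd : ∀ r ∈ Icc 0 t, h r - A * Real.exp (L * r) ≤ M + |A| * Real.exp (L * t) := by
    intro r hr
    have := Real.exp_le_exp.2 (mul_le_mul_of_nonneg_left hr.2 hL)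
    nlinarith [hM r hr, neg_abs_le A, abs_nonneg A, Real.exp_pos (L * r)]
  have hnonpos : ∀ s ∈ Icc 0 r, h s - A * Real.exp (L * s) ≤ 0 := fun s hs =>
    nonpos_of_le_mul_integral hL (hh.sub (hexp.intervalIntegrable _ _)) hbdd
      (fun r hr => by rw [hgap r hr]; linarith [hle r hr]) ⟨hs.1, hs.2.trans hr.2⟩
  have hint : ∫ s in (0:ℝ)..r, (h s - A * Real.exp (L * s)) ≤ 0 := by
    have := intervalIntegral.integral_nonneg (μ := volume) hr.1 fun s hs =>
      neg_nonneg.2 (hnonpos s hs)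
    rwa [intervalIntegral.integral_neg, neg_nonneg] at this
  linarith [hgap r hr, mul_nonpos_of_nonneg_of_nonpos hL hint]

end Gronwall

theorem unif_le_of_eq_add_integral_sub {z e F F' G : ℝ → ℝ} {r E d : ℝ} (hr : 0 ≤ r)
    (hz : ∀ s ∈ Icc 0 r, z s = e s + ((∫ u in (0:ℝ)..s, F u) - ∫ u in (0:ℝ)..s, F' u))
    (he : ∀ s ∈ Icc 0 r, |e s| ≤ E)
    (hF : IntervalIntegrable F volume 0 r) (hF' : IntervalIntegrable F' volume 0 r)
    (hG : IntervalIntegrable G volume 0 r) (hG0 : ∀ u ∈ Icc 0 r, 0 ≤ G u) (hd : 0 ≤ d)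
    (hFG : ∀ u ∈ Icc 0 r, |F u - F' u| ≤ G u + d) :
    unif z r ≤ E + r * d + ∫ u in (0:ℝ)..r, G u := by
  refine unif_le hr fun s hs => ?_
  have hsr : uIcc 0 s ⊆ uIcc 0 r := uIcc_subset_uIcc_left (Icc_subset_uIcc hs)
  have hdrift : |(∫ u in (0:ℝ)..s, F u) - ∫ u in (0:ℝ)..s, F' u|
      ≤ (∫ u in (0:ℝ)..s, G u) + s * d := by
    rw [← intervalIntegral.integral_sub (hF.mono_set hsr) (hF'.mono_set hsr)]
    refine (intervalIntegral.norm_integral_le_of_norm_le hs.1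
      (.of_forall fun u hu => (Real.norm_eq_abs _).trans_le (hFG u ⟨hu.1.le, hu.2.trans hs.2⟩))
      ((hG.mono_set hsr).add intervalIntegrable_const)).trans_eq ?_
    rw [intervalIntegral.integral_add (hG.mono_set hsr) intervalIntegrable_const,
      intervalIntegral.integral_const, smul_eq_mul, sub_zero]
  have hGmono : ∫ u in (0:ℝ)..s, G u ≤ ∫ u in (0:ℝ)..r, G u :=
    intervalIntegral.integral_mono_interval le_rfl hs.1 hs.2
      (ae_restrict_of_forall_mem measurableSet_Ioc fun u hu => hG0 u (Ioc_subset_Icc_self hu)) hG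
  calc |z s| ≤ |e s| + |(∫ u in (0:ℝ)..s, F u) - ∫ u in (0:ℝ)..s, F' u| := by
        rw [hz s hs]; exact abs_add_le _ _
    _ ≤ E + r * d + ∫ u in (0:ℝ)..r, G u := by
        linarith [he s hs, mul_le_mul_of_nonneg_right hs.2 hd]

theorem Cadlag.monotoneOn_unif_sub {x x' : ℝ → ℝ} (hx : Cadlag x) (hx' : Cadlag x') (t : ℝ) :
    MonotoneOn (unif fun s => x s - x' s) (Icc 0 t) :=
  let ⟨_, hM⟩ := hx.exists_bound t
  let ⟨_, hM'⟩ := hx'.exists_bound t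
  monotoneOn_unif (abs_sub_le_add_of_abs_le hM hM')

theorem Cadlag.abs_le_unif_sub {x x' : ℝ → ℝ} (hx : Cadlag x) (hx' : Cadlag x') {t s : ℝ}
    (hs : s ∈ Icc 0 t) : |x s - x' s| ≤ unif (fun s => x s - x' s) t :=
  let ⟨_, hM⟩ := hx.exists_bound t
  let ⟨_, hM'⟩ := hx'.exists_bound t
  abs_le_unif (abs_sub_le_add_of_abs_le hM hM') hs

theorem Cadlag.abs_phiE_sub_phiE_le {x x' : ℝ → ℝ} (hx : Cadlag x) (hx' : Cadlag x')
    (B B' : ℝ≥0∞) {t u : ℝ} (hu : u ∈ Icc 0 t) :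
    |phiE B' x' u - phiE B x u|
      ≤ 2 * unif (fun s => x' s - x s) u + unif (fun s => phiE B' x s - phiE B x s) t := by
  obtain ⟨M, hM⟩ := hx.exists_bound t
  obtain ⟨Mu, hMu⟩ := hx.exists_bound u
  obtain ⟨Mu', hMu'⟩ := hx'.exists_bound u
  have hlip := abs_phiE_sub_le_unif B' hu.1 hMu' hMu
  have hbarrier := abs_le_unif
    (abs_sub_le_add_of_abs_le (abs_phiE_le B' hM) (abs_phiE_le B hM)) hu
  calc |phiE B' x' u - phiE B x u|
      ≤ |phiE B' x' u - phiE B' x u| + |phiE B' x u - phiE B x u| := abs_sub_le _ _ _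
    _ ≤ _ := add_le_add hlip hbarrier

section AuxSystem

variable {B Bn : ℝ≥0∞} {b₁ b₂ bn₁ bn₂ : ℝ} {y₁ y₂ yn₁ yn₂ w₁ w₂ wn₁ wn₂ : ℝ → ℝ} {t r : ℝ}

theorem IsAuxSolution.monotoneOn_unif_sub_add (hsol : IsAuxSolution B b₁ b₂ y₁ y₂ w₁ w₂)
    (hsoln : IsAuxSolution Bn bn₁ bn₂ yn₁ yn₂ wn₁ wn₂) (t : ℝ) :
    MonotoneOn (fun r => unif (fun s => wn₁ s - w₁ s) r + unif (fun s => wn₂ s - w₂ s) r)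
      (Icc 0 t) :=
  (hsoln.1.monotoneOn_unif_sub hsol.1 t).add (hsoln.2.1.monotoneOn_unif_sub hsol.2.1 t)

theorem abs_drift_sub_drift_le (hw₁ : Cadlag w₁) (hw₂ : Cadlag w₂) (hwn₁ : Cadlag wn₁)
    (hwn₂ : Cadlag wn₂) {u : ℝ} (hu : u ∈ Icc 0 t) :
    |(-(phiR 0 wn₁ u) + phiE Bn wn₂ u) - (-(phiR 0 w₁ u) + phiE B w₂ u)|
      ≤ 2 * (unif (fun s => wn₁ s - w₁ s) u + unif (fun s => wn₂ s - w₂ s) u)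
        + unif (fun s => phiE Bn w₂ s - phiE B w₂ s) t := by
  obtain ⟨M, hM⟩ := hw₁.exists_bound u
  obtain ⟨Mn, hMn⟩ := hwn₁.exists_bound u
  have h₁ := abs_phiR_sub_le_unif (κ := 0) hu.1 hMn hM
  have h₂ := hw₂.abs_phiE_sub_phiE_le hwn₂ B Bn hu
  calc _ = |-(phiR 0 wn₁ u - phiR 0 w₁ u) + (phiE Bn wn₂ u - phiE B w₂ u)| := by
        congr 1; ring
    _ ≤ |phiR 0 wn₁ u - phiR 0 w₁ u| + |phiE Bn wn₂ u - phiE B w₂ u| := by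
        simpa only [abs_neg] using abs_add_le (-(phiR 0 wn₁ u - phiR 0 w₁ u)) _
    _ ≤ _ := by linarith

theorem IsAuxSolution.unif_sub_fst_le (hsol : IsAuxSolution B b₁ b₂ y₁ y₂ w₁ w₂)
    (hsoln : IsAuxSolution Bn bn₁ bn₂ yn₁ yn₂ wn₁ wn₂) (hy₁ : Cadlag y₁) (hyn₁ : Cadlag yn₁)
    (hr : r ∈ Icc 0 t) :
    unif (fun s => wn₁ s - w₁ s) r ≤ |bn₁ - b₁| + unif (fun s => yn₁ s - y₁ s) t
      + t * unif (fun s => phiE Bn w₂ s - phiE B w₂ s) t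
      + 2 * ∫ s in (0:ℝ)..r, (unif (fun u => wn₁ u - w₁ u) s + unif (fun u => wn₂ u - w₂ u) s) := by
  have hgaps := hsol.monotoneOn_unif_sub_add hsoln r
  obtain ⟨hw₁, hw₂, hw₁eq, -, -⟩ := hsol
  obtain ⟨hwn₁, hwn₂, hwn₁eq, -, -⟩ := hsoln
  have key := unif_le_of_eq_add_integral_sub (z := fun s => wn₁ s - w₁ s)
    (e := fun s => (bn₁ - b₁) + (yn₁ s - y₁ s))
    (F := fun s => -(phiR 0 wn₁ s) + phiE Bn wn₂ s) (F' := fun s => -(phiR 0 w₁ s) + phiE B w₂ s)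
    (G := fun s => 2 * (unif (fun u => wn₁ u - w₁ u) s + unif (fun u => wn₂ u - w₂ u) s)) hr.1
    (fun s hs => by rw [hwn₁eq s hs.1, hw₁eq s hs.1]; ring)
    (fun s hs => (abs_add_le _ _).trans
      (add_le_add le_rfl (hyn₁.abs_le_unif_sub hy₁ ⟨hs.1, hs.2.trans hr.2⟩)))
    ((hwn₁.intervalIntegrable_phiR 0 hr.1).neg.add (hwn₂.intervalIntegrable_phiE Bn hr.1))
    ((hw₁.intervalIntegrable_phiR 0 hr.1).neg.add (hw₂.intervalIntegrable_phiE B hr.1))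
    ((hgaps.intervalIntegrable_of_le hr.1).const_mul 2)
    (fun _ _ => mul_nonneg zero_le_two (add_nonneg (unif_nonneg _ _) (unif_nonneg _ _)))
    (unif_nonneg _ _)
    (fun u hu => abs_drift_sub_drift_le hw₁ hw₂ hwn₁ hwn₂ ⟨hu.1, hu.2.trans hr.2⟩)
  rw [intervalIntegral.integral_const_mul] at key
  linarith [mul_le_mul_of_nonneg_right hr.2 (unif_nonneg (fun s => phiE Bn w₂ s - phiE B w₂ s) t)]

theorem IsAuxSolution.unif_sub_snd_le (hsol : IsAuxSolution B b₁ b₂ y₁ y₂ w₁ w₂)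
    (hsoln : IsAuxSolution Bn bn₁ bn₂ yn₁ yn₂ wn₁ wn₂) (hy₂ : Cadlag y₂) (hyn₂ : Cadlag yn₂)
    (hr : r ∈ Icc 0 t) :
    unif (fun s => wn₂ s - w₂ s) r ≤ |bn₂ - b₂| + unif (fun s => yn₂ s - y₂ s) t
      + unif (fun s => wn₁ s - w₁ s) r + t * unif (fun s => phiE Bn w₂ s - phiE B w₂ s) t
      + 2 * ∫ s in (0:ℝ)..r, (unif (fun u => wn₁ u - w₁ u) s + unif (fun u => wn₂ u - w₂ u) s) := by
  have hgaps := hsol.monotoneOn_unif_sub_add hsoln r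
  obtain ⟨hw₁, hw₂, -, hw₂eq, -⟩ := hsol
  obtain ⟨hwn₁, hwn₂, -, hwn₂eq, -⟩ := hsoln
  have he : ∀ s ∈ Icc 0 r, |(bn₂ - b₂) + (yn₂ s - y₂ s) + (psiR 0 wn₁ s - psiR 0 w₁ s)|
      ≤ |bn₂ - b₂| + unif (fun s => yn₂ s - y₂ s) t + unif (fun s => wn₁ s - w₁ s) r := by
    intro s hs
    obtain ⟨M, hM⟩ := hw₁.exists_bound s
    obtain ⟨Mn, hMn⟩ := hwn₁.exists_bound s
    have hψ := (abs_psiR_sub_le_unif (κ := 0) hs.1 hMn hM).trans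
      (hwn₁.monotoneOn_unif_sub hw₁ r hs ⟨hr.1, le_rfl⟩ hs.2)
    have hy := hyn₂.abs_le_unif_sub hy₂ ⟨hs.1, hs.2.trans hr.2⟩
    linarith [abs_add_le ((bn₂ - b₂) + (yn₂ s - y₂ s)) (psiR 0 wn₁ s - psiR 0 w₁ s),
      abs_add_le (bn₂ - b₂) (yn₂ s - y₂ s)]
  have key := unif_le_of_eq_add_integral_sub (z := fun s => wn₂ s - w₂ s)
    (e := fun s => (bn₂ - b₂) + (yn₂ s - y₂ s) + (psiR 0 wn₁ s - psiR 0 w₁ s))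
    (F := fun s => -(phiE Bn wn₂ s)) (F' := fun s => -(phiE B w₂ s))
    (G := fun s => 2 * (unif (fun u => wn₁ u - w₁ u) s + unif (fun u => wn₂ u - w₂ u) s)) hr.1
    (fun s hs => by rw [hwn₂eq s hs.1, hw₂eq s hs.1]; ring) he
    (hwn₂.intervalIntegrable_phiE Bn hr.1).neg (hw₂.intervalIntegrable_phiE B hr.1).neg
    ((hgaps.intervalIntegrable_of_le hr.1).const_mul 2)
    (fun _ _ => mul_nonneg zero_le_two (add_nonneg (unif_nonneg _ _) (unif_nonneg _ _)))
    (unif_nonneg _ _)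
    (fun u hu => by
      have := hw₂.abs_phiE_sub_phiE_le hwn₂ B Bn ⟨hu.1, hu.2.trans hr.2⟩
      rw [neg_sub_neg, abs_sub_comm]
      linarith [unif_nonneg (fun s => wn₁ s - w₁ s) u])
  rw [intervalIntegral.integral_const_mul] at key
  linarith [mul_le_mul_of_nonneg_right hr.2 (unif_nonneg (fun s => phiE Bn w₂ s - phiE B w₂ s) t)]

end AuxSystem

theorem aux_system_stability_general
    (B Bn : ℝ≥0∞) (b₁ b₂ bn₁ bn₂ : ℝ) (y₁ y₂ yn₁ yn₂ : ℝ → ℝ)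
    (hy₁ : Cadlag y₁) (hy₂ : Cadlag y₂) (hyn₁ : Cadlag yn₁) (hyn₂ : Cadlag yn₂)
    (w₁ w₂ wn₁ wn₂ : ℝ → ℝ)
    (hsol : IsAuxSolution B b₁ b₂ y₁ y₂ w₁ w₂)
    (hsoln : IsAuxSolution Bn bn₁ bn₂ yn₁ yn₂ wn₁ wn₂)
    (t δ : ℝ) (ht : 0 ≤ t)
    (hclose : max |bn₁ - b₁| |bn₂ - b₂| +
        max (unif (fun s => yn₁ s - y₁ s) t) (unif (fun s => yn₂ s - y₂ s) t) +
        unif (fun s => phiE Bn w₂ s - phiE B w₂ s) t < δ) :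
    unif (fun s => wn₁ s - w₁ s) t ≤ 2 * δ * (1 + t) * Real.exp (6 * t) ∧
    unif (fun s => wn₂ s - w₂ s) t ≤ 4 * δ * (1 + t) * Real.exp (6 * t) := by
  set g₁ := unif fun s => wn₁ s - w₁ s
  set g₂ := unif fun s => wn₂ s - w₂ s
  set b := max |bn₁ - b₁| |bn₂ - b₂|
  set y := max (unif (fun s => yn₁ s - y₁ s) t) (unif (fun s => yn₂ s - y₂ s) t)
  set d := unif (fun s => phiE Bn w₂ s - phiE B w₂ s) t
  have hb : 0 ≤ b := (abs_nonneg _).trans (le_max_left _ _)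
  have hy : 0 ≤ y := (unif_nonneg _ _).trans (le_max_left _ _)
  have hd : 0 ≤ d := unif_nonneg _ _
  have est₁ (r : ℝ) (hr : r ∈ Icc 0 t) :
      g₁ r ≤ b + y + t * d + 2 * ∫ s in (0:ℝ)..r, (g₁ s + g₂ s) := by
    linarith [hsol.unif_sub_fst_le hsoln hy₁ hyn₁ hr, le_max_left |bn₁ - b₁| |bn₂ - b₂|,
      le_max_left (unif (fun s => yn₁ s - y₁ s) t) (unif (fun s => yn₂ s - y₂ s) t)]
  have est₂ (r : ℝ) (hr : r ∈ Icc 0 t) :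
      g₂ r ≤ b + y + t * d + g₁ r + 2 * ∫ s in (0:ℝ)..r, (g₁ s + g₂ s) := by
    linarith [hsol.unif_sub_snd_le hsoln hy₂ hyn₂ hr, le_max_right |bn₁ - b₁| |bn₂ - b₂|,
      le_max_right (unif (fun s => yn₁ s - y₁ s) t) (unif (fun s => yn₂ s - y₂ s) t)]
  have hgaps := hsol.monotoneOn_unif_sub_add hsoln t
  have hgron := add_mul_integral_le_mul_exp (A := 3 * (b + y + t * d)) (L := 6) (by norm_num)
    (hgaps.intervalIntegrable_of_le ht) (fun r hr => hgaps hr ⟨ht, le_rfl⟩ hr.2)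
    (fun r hr => by linarith [est₁ r hr, est₂ r hr]) ⟨ht, le_rfl⟩
  have hK : b + y + t * d ≤ δ * (1 + t) := by nlinarith [mul_le_mul_of_nonneg_left hclose.le ht]
  have hexp := mul_le_mul_of_nonneg_right hK (Real.exp_pos (6 * t)).le
  have hδ : 0 ≤ δ * (1 + t) * Real.exp (6 * t) :=
    mul_nonneg (by nlinarith [mul_nonneg ht hd]) (Real.exp_pos _).le
  constructor <;> linarith [est₁ t ⟨ht, le_rfl⟩, est₂ t ⟨ht, le_rfl⟩]

/-- **Quantitative stability of the unreflected auxiliary system.**  Let `w`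
solve the system for data `(B,b,y)` and `wⁿ` solve it for data `(Bⁿ,bⁿ,yⁿ)`.
Fix `t ≥ 0` and `δ > 0` with
`|bⁿ − b| + ‖yⁿ − y‖_t + ‖φ_{Bⁿ}(w₂) − φ_B(w₂)‖_t < δ`.  Then
`‖w₁ⁿ − w₁‖_t ≤ 2δ(1+t)e^{6t}` and `‖w₂ⁿ − w₂‖_t ≤ 4δ(1+t)e^{6t}`. -/
theorem aux_system_stability
    (B Bn : ℝ≥0∞) (b₁ b₂ bn₁ bn₂ : ℝ) (y₁ y₂ yn₁ yn₂ : ℝ → ℝ)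
    (hy₁ : Cadlag y₁) (hy₂ : Cadlag y₂) (hyn₁ : Cadlag yn₁) (hyn₂ : Cadlag yn₂)
    (w₁ w₂ wn₁ wn₂ : ℝ → ℝ)
    (hsol : IsAuxSolution B b₁ b₂ y₁ y₂ w₁ w₂)
    (hsoln : IsAuxSolution Bn bn₁ bn₂ yn₁ yn₂ wn₁ wn₂)
    (t δ : ℝ) (ht : 0 ≤ t) (hδ : 0 < δ)
    (hclose : max |bn₁ - b₁| |bn₂ - b₂| +
        max (unif (fun s => yn₁ s - y₁ s) t) (unif (fun s => yn₂ s - y₂ s) t) +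
        unif (fun s => phiE Bn w₂ s - phiE B w₂ s) t < δ) :
    unif (fun s => wn₁ s - w₁ s) t ≤ 2 * δ * (1 + t) * Real.exp (6 * t) ∧
    unif (fun s => wn₂ s - w₂ s) t ≤ 4 * δ * (1 + t) * Real.exp (6 * t) :=
  aux_system_stability_general B Bn b₁ b₂ bn₁ bn₂ y₁ y₂ yn₁ yn₂ hy₁ hy₂ hyn₁ hyn₂ w₁ w₂ wn₁ wn₂ hsol
    hsoln t δ ht hclose
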